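/- arXiv:1708.09122 — 3 statements merged into one kernel-verified Lean document; each statement's English description precedes it below -/
import Mathlib

section
/- In the Task Scheduling Game, when a player i adds a single task k ∉ s_i to his strategy (keeping others' strategies fixed), the change in his payoff equals the change in the potential function Φ, and both equal V_k/(M_k(s)+1) − (c_i(s_i ∪ {k}) − c_i(s_i)), where M_k(s) is the number of players selecting k before the change. -/
/-!
Adding `k` to `s i` raises the number of players on `k` from `M` to `M + 1` and leaves every
other count unchanged. Player `i` therefore gains the new share `V k / (M + 1)` and keeps the
shares of his old tasks, while the potential gains exactly its new harmonic term `V k / (M + 1)`;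
in both, the only cost that changes is player `i`'s.
-/


/-- Number of players choosing task `k` under profile `s`. -/
def Mk {ι σ : Type*} [Fintype ι] [DecidableEq σ] (s : ι → Finset σ) (k : σ) : ℕ :=
  (Finset.univ.filter (fun i => k ∈ s i)).card

/-- Payoff of player `i` in the Task Scheduling Game. -/
noncomputable def payoff {ι σ : Type*} [Fintype ι] [DecidableEq σ] (V : σ → ℝ)
    (c : ι → Finset σ → ℝ) (i : ι) (s : ι → Finset σ) : ℝ :=
  (∑ k ∈ s i, V k / (Mk s k : ℝ)) - c i (s i)

/-- Potential function of the Task Scheduling Game. -/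
noncomputable def potential {ι σ : Type*} [Fintype ι] [Fintype σ] [DecidableEq σ]
    (V : σ → ℝ) (c : ι → Finset σ → ℝ) (s : ι → Finset σ) : ℝ :=
  (∑ k : σ, ∑ m ∈ Finset.Icc 1 (Mk s k), V k / (m : ℝ)) - ∑ i : ι, c i (s i)

theorem Fintype.sum_sub_sum_eq_of_eq_of_ne {ι M : Type*} [Fintype ι] [AddCommGroup M]
    {f g : ι → M} (a : ι) (h : ∀ j, j ≠ a → f j = g j) :
    ∑ j, f j - ∑ j, g j = f a - g a := by
  rw [← Finset.sum_sub_distrib, Finset.sum_eq_single a]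
  · intro j _ hj
    rw [h j hj, sub_self]
  · simp

section Mk

variable {ι σ : Type*} [Fintype ι] [DecidableEq ι] [DecidableEq σ]

theorem Mk_update_of_mem_iff (s : ι → Finset σ) (i : ι) (t : Finset σ) {j : σ}
    (h : j ∈ t ↔ j ∈ s i) : Mk (Function.update s i t) j = Mk s j := by
  unfold Mk
  congr 1
  ext x
  rcases eq_or_ne x i with rfl | hx <;> simp [*]

theorem Mk_update_of_mem_of_notMem (s : ι → Finset σ) (i : ι) {t : Finset σ} {k : σ}
    (ht : k ∈ t) (hk : k ∉ s i) : Mk (Function.update s i t) k = Mk s k + 1 := by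
  unfold Mk
  rw [← Finset.card_insert_of_notMem (s := Finset.univ.filter _) (a := i) (by simpa using hk)]
  congr 1
  ext x
  rcases eq_or_ne x i with rfl | hx <;> simp [*]

theorem Mk_update_insert_of_ne (s : ι → Finset σ) (i : ι) {k j : σ} (hj : j ≠ k) :
    Mk (Function.update s i (insert k (s i))) j = Mk s j :=
  Mk_update_of_mem_iff s i _ (by simp [hj])

theorem Mk_update_insert_self (s : ι → Finset σ) (i : ι) {k : σ} (hk : k ∉ s i) :
    Mk (Function.update s i (insert k (s i))) k = Mk s k + 1 :=
  Mk_update_of_mem_of_notMem s i (Finset.mem_insert_self k _) hk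

end Mk

section AddTask

variable {ι σ : Type*} [Fintype ι] [DecidableEq ι] [DecidableEq σ]
  (V : σ → ℝ) (c : ι → Finset σ → ℝ) (i : ι) (s : ι → Finset σ) {k : σ}

theorem payoff_update_insert_sub (hk : k ∉ s i) :
    payoff V c i (Function.update s i (insert k (s i))) - payoff V c i s =
      V k / ((Mk s k : ℝ) + 1) - (c i (insert k (s i)) - c i (s i)) := by
  have hshares : ∑ j ∈ s i, V j / (Mk (Function.update s i (insert k (s i))) j : ℝ) =
      ∑ j ∈ s i, V j / (Mk s j : ℝ) :=
    Finset.sum_congr rfl fun j hj => by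
      rw [Mk_update_insert_of_ne s i (ne_of_mem_of_not_mem hj hk)]
  simp only [payoff, Function.update_self, Finset.sum_insert hk, hshares,
    Mk_update_insert_self s i hk, Nat.cast_succ]
  ring

theorem sum_cost_update_insert_sub :
    ∑ j, c j (Function.update s i (insert k (s i)) j) - ∑ j, c j (s j) =
      c i (insert k (s i)) - c i (s i) := by
  rw [Fintype.sum_sub_sum_eq_of_eq_of_ne i fun j hj => by rw [Function.update_of_ne hj],
    Function.update_self]

theorem potential_update_insert_sub [Fintype σ] (hk : k ∉ s i) :
    potential V c (Function.update s i (insert k (s i))) - potential V c s =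
      V k / ((Mk s k : ℝ) + 1) - (c i (insert k (s i)) - c i (s i)) := by
  have htasks : ∑ j, ∑ m ∈ Finset.Icc 1 (Mk (Function.update s i (insert k (s i))) j), V j / m -
      ∑ j, ∑ m ∈ Finset.Icc 1 (Mk s j), V j / (m : ℝ) = V k / ((Mk s k : ℝ) + 1) := by
    rw [Fintype.sum_sub_sum_eq_of_eq_of_ne k fun j hj => by rw [Mk_update_insert_of_ne s i hj],
      Mk_update_insert_self s i hk, Finset.sum_Icc_succ_top (Nat.le_add_left 1 _)]
    push_cast
    ring
  rw [potential, potential, sub_sub_sub_comm, htasks, sum_cost_update_insert_sub]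

end AddTask

theorem stmt_2_general {ι σ : Type*} [Fintype ι] [DecidableEq ι] [Fintype σ] [DecidableEq σ]
    (V : σ → ℝ) (c : ι → Finset σ → ℝ)
    (i : ι) (s : ι → Finset σ) (k : σ) (hk : k ∉ s i) :
    payoff V c i (Function.update s i (insert k (s i))) - payoff V c i s =
      V k / ((Mk s k : ℝ) + 1) - (c i (insert k (s i)) - c i (s i)) ∧
    potential V c (Function.update s i (insert k (s i))) - potential V c s =
      V k / ((Mk s k : ℝ) + 1) - (c i (insert k (s i)) - c i (s i)) :=
  ⟨payoff_update_insert_sub V c i s hk, potential_update_insert_sub V c i s hk⟩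

theorem stmt_2 {ι σ : Type*} [Fintype ι] [DecidableEq ι] [Fintype σ] [DecidableEq σ]
    (V : σ → ℝ) (hV : ∀ k, 0 ≤ V k) (c : ι → Finset σ → ℝ)
    (i : ι) (s : ι → Finset σ) (k : σ) (hk : k ∉ s i) :
    payoff V c i (Function.update s i (insert k (s i))) - payoff V c i s =
      V k / ((Mk s k : ℝ) + 1) - (c i (insert k (s i)) - c i (s i)) ∧
    potential V c (Function.update s i (insert k (s i))) - potential V c s =
      V k / ((Mk s k : ℝ) + 1) - (c i (insert k (s i)) - c i (s i)) :=
  stmt_2_general V c i s k hk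
end

section
/- Every finite exact potential game possesses at least one Nash equilibrium (in pure strategies). -/
/-! A profile maximizing the potential is a pure Nash equilibrium: a unilateral deviation changes the
deviator's payoff by exactly the change in the potential, which cannot increase. A finite game has
finitely many profiles, so such a maximizer exists. -/

theorem payoff_update_le_of_isMaxOn_potential {ι : Type*} [DecidableEq ι] {σ : ι → Type*}
    (u : ι → (∀ i, σ i) → ℝ) (Φ : (∀ i, σ i) → ℝ)
    (hΦ : ∀ (i : ι) (s : ∀ j, σ j) (si si' : σ i),
      u i (Function.update s i si) - u i (Function.update s i si') =
        Φ (Function.update s i si) - Φ (Function.update s i si'))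
    {s : ∀ i, σ i} (hs : IsMaxOn Φ Set.univ s) (i : ι) (si' : σ i) :
    u i (Function.update s i si') ≤ u i s := by
  have hdiff := hΦ i s si' (s i)
  rw [Function.update_eq_self] at hdiff
  have hle : Φ (Function.update s i si') ≤ Φ s := hs (Set.mem_univ _)
  linarith

theorem stmt_4 {ι : Type*} [Fintype ι] [DecidableEq ι] {σ : ι → Type*}
    [∀ i, Fintype (σ i)] [∀ i, Nonempty (σ i)]
    (u : ι → (∀ i, σ i) → ℝ) (Φ : (∀ i, σ i) → ℝ)
    (hΦ : ∀ (i : ι) (s : ∀ j, σ j) (si si' : σ i),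
      u i (Function.update s i si) - u i (Function.update s i si') =
        Φ (Function.update s i si) - Φ (Function.update s i si')) :
    ∃ sstar : ∀ i, σ i, ∀ (i : ι) (si' : σ i),
      u i (Function.update sstar i si') ≤ u i sstar := by
  obtain ⟨sstar, hmax⟩ := Finite.exists_max Φ
  exact ⟨sstar, payoff_update_le_of_isMaxOn_potential u Φ hΦ fun t _ => hmax t⟩
end

section
/- Let Φ(s) = ∑_{k∈S} ∑_{m=1}^{M_k(s)} V_k/m − ∑_i c_i(s_i) and W(s) = ∑_{k∈S} V_k·1_{M_k(s)≥1} − ∑_i c_i(s_i) with all V_k ≥ 0 and H_N = ∑_{m=1}^N 1/m the N-th harmonic number, where N = |N| is the number of players. Then for every strategy profile s, Φ(s) ≤ H_N · ∑_{k∈S} V_k·1_{M_k(s)≥1} − ∑_i c_i(s_i); in particular if all costs are zero, Φ(s) ≤ H_N · W(s). -/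
/-- Social welfare of the Task Scheduling Game. -/
noncomputable def welfare {ι σ : Type*} [Fintype ι] [Fintype σ] [DecidableEq σ]
    (V : σ → ℝ) (c : ι → Finset σ → ℝ) (s : ι → Finset σ) : ℝ :=
  (∑ k : σ, if 1 ≤ Mk s k then V k else 0) - ∑ i : ι, c i (s i)


theorem Mk_le_card {ι σ : Type*} [Fintype ι] [DecidableEq σ] (s : ι → Finset σ) (k : σ) :
    Mk s k ≤ Fintype.card ι :=
  (Finset.card_filter_le _ _).trans Finset.card_univ.le

theorem sum_Icc_div_le_harmonic_mul_ite {a : ℝ} (ha : 0 ≤ a) {m N : ℕ} (hmN : m ≤ N) :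
    ∑ j ∈ Finset.Icc 1 m, a / j ≤
      (∑ j ∈ Finset.Icc 1 N, (1 : ℝ) / j) * if 1 ≤ m then a else 0 := by
  rcases Nat.eq_zero_or_pos m with rfl | hm
  · simp
  rw [if_pos (Nat.one_le_iff_ne_zero.mpr hm.ne'), Finset.sum_mul]
  calc ∑ j ∈ Finset.Icc 1 m, a / j
      ≤ ∑ j ∈ Finset.Icc 1 N, a / j :=
        Finset.sum_le_sum_of_subset_of_nonneg (Finset.Icc_subset_Icc_right hmN)
          fun j _ _ => by positivity
    _ = ∑ j ∈ Finset.Icc 1 N, 1 / (j : ℝ) * a := by simp only [one_div_mul_eq_div]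

theorem potential_le_harmonic_mul {ι σ : Type*} [Fintype ι] [Fintype σ] [DecidableEq σ]
    (V : σ → ℝ) (hV : ∀ k, 0 ≤ V k) (c : ι → Finset σ → ℝ) (s : ι → Finset σ) :
    potential V c s ≤
      (∑ m ∈ Finset.Icc 1 (Fintype.card ι), (1 : ℝ) / m) *
        (∑ k : σ, if 1 ≤ Mk s k then V k else 0) - ∑ i : ι, c i (s i) := by
  rw [potential, Finset.mul_sum]
  gcongr with k
  exact sum_Icc_div_le_harmonic_mul_ite (hV k) (Mk_le_card s k)

theorem stmt_11 {ι σ : Type*} [Fintype ι] [Fintype σ] [DecidableEq σ]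
    (V : σ → ℝ) (hV : ∀ k, 0 ≤ V k) (c : ι → Finset σ → ℝ) (s : ι → Finset σ) :
    potential V c s ≤
      (∑ m ∈ Finset.Icc 1 (Fintype.card ι), (1 : ℝ) / m) *
        (∑ k : σ, if 1 ≤ Mk s k then V k else 0) - ∑ i : ι, c i (s i) ∧
    ((∀ (i : ι) (t : Finset σ), c i t = 0) →
      potential V c s ≤
        (∑ m ∈ Finset.Icc 1 (Fintype.card ι), (1 : ℝ) / m) * welfare V c s) := by
  refine ⟨potential_le_harmonic_mul V hV c s, fun hc => ?_⟩
  have hcost : ∑ i : ι, c i (s i) = 0 := Finset.sum_eq_zero fun i _ => hc i (s i)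
  simpa only [welfare, hcost, sub_zero] using potential_le_harmonic_mul V hV c s
end
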